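/- arXiv:1401.0758 — 2 statements merged into one kernel-verified Lean document; each statement's English description precedes it below -/
import Mathlib

section
/- Let G be a connected 3-regular graph with cutwidth r+1. Then the XOR constraint system φ(G, f, g), where f and g have different parity, cannot be refuted by width-r resolution: the empty set does not derive the contradiction ∅ ~⁻ ∅ using only intermediate XOR constraints on at most r variables. -/
/-!
Follow a width-`r` refutation step by step and let `W i` be the set of vertices whose constraint
`⊕_u y_{(v,u)} = 0` has been used an odd number of times in the first `i` steps. For an edge
`{v, u}` with `v ∈ W i` and `u ∉ W i`, the variables `x_{(v,u)}, y_{(v,u)}, x_{(u,v)}, y_{(u,v)}`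
cannot all be absent from the current constraint, so the cut of `W i` has at most `r` edges; and
`W` gains at most one vertex per step. At the end the current constraint is empty, which forces
adjacent, hence all, vertices to have the same parity. If all are even, so is the number of uses
of every edge constraint, and the derived right-hand side is `0`. If all are odd, `W` runs from `∅`
to `V`: a crusade of width `r`. Uncrossing, by submodularity of the cut, makes it monotone, i.e. a
linear order of cutwidth at most `r`.
-/

open SimpleGraph

noncomputable def cutCount {V : Type*} (G : SimpleGraph V) (S : Set V) : ℕ :=
  {p : V × V | p.1 ∈ S ∧ p.2 ∉ S ∧ G.Adj p.1 p.2}.ncard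

noncomputable def cutwidth {V : Type*} [Fintype V] (G : SimpleGraph V) : ℕ :=
  sInf { w | ∃ π : Fin (Fintype.card V) ≃ V,
    ∀ i : Fin (Fintype.card V), cutCount G (π '' {j | j ≤ i}) ≤ w }

def EvenParity {V : Type*} [Fintype V] [DecidableEq V] (G : SimpleGraph V)
    [DecidableRel G.Adj] (f : Sym2 V → Bool) : Prop :=
  Even ((G.edgeFinset.filter fun e => f e = true).card)

/-- Variables of the XOR system `φ(G,f,g)`: `(false, v, u)` is `x_{(v,u)}` and
`(true, v, u)` is `y_{(v,u)}`, for each directed edge `(v,u)`. -/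
abbrev XVar (V : Type*) := Bool × V × V

/-- The XOR constraint system `φ(G,f,g)`: a constraint is a pair (set of variables,
right-hand side). For each vertex `v` and neighbor `u`: `x_{(v,u)} ⊕ y_{(v,u)} = 0`;
for each vertex `v`: `⊕_{u ∈ Γ(v)} y_{(v,u)} = 0`; for each edge `(u,v)`:
`x_{(u,v)} ⊕ x_{(v,u)} = f((u,v)) ⊕ g((u,v))`. -/
def phiSystem {V : Type*} [Fintype V] [DecidableEq V] (G : SimpleGraph V)
    [DecidableRel G.Adj] (f g : Sym2 V → Bool) : Set (Finset (XVar V) × Bool) :=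
  {c | (∃ v u, G.Adj v u ∧ c = ({(false, v, u), (true, v, u)}, false))
    ∨ (∃ v : V, c = ((G.neighborFinset v).image (fun u => (true, v, u)), false))
    ∨ (∃ v u, G.Adj v u ∧ c = ({(false, v, u), (false, u, v)}, f s(v, u) ^^ g s(v, u)))}

/-- `XorDerives Φ w S T sgn`: from the XOR constraint `⊕S = 0` one can derive
`⊕T = sgn` by a sequence of steps each XORing in a constraint of `Φ`, with every
intermediate constraint containing at most `w` variables. -/
def XorDerives {V : Type*} [DecidableEq V] (Φ : Set (Finset (XVar V) × Bool))
    (w : ℕ) (S T : Finset (XVar V)) (sgn : Bool) : Prop :=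
  ∃ (t : ℕ) (Seq : ℕ → Finset (XVar V)) (c : ℕ → Finset (XVar V) × Bool),
    Seq 0 = S ∧ Seq t = T ∧
    (∀ i < t, c i ∈ Φ ∧ Seq (i + 1) = symmDiff (Seq i) (c i).1) ∧
    (∀ i ≤ t, (Seq i).card ≤ w) ∧
    sgn = decide (Odd (((Finset.range t).filter fun i => (c i).2 = true).card))

/-- A width-`w` resolution refutation of `Φ`: a derivation of `⊕∅ = 1` from `⊕∅ = 0`. -/
def XorRefutable {V : Type*} [DecidableEq V] (Φ : Set (Finset (XVar V) × Bool))
    (w : ℕ) : Prop :=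
  XorDerives Φ w ∅ ∅ true

open Finset Function

lemma Finset.sum_comp_update_add {ι β M : Type*} [DecidableEq ι] [AddCommMonoid M]
    {s : Finset ι} {k : ι} (hk : k ∈ s) (F : β → M) (X : ι → β) (b : β) :
    ∑ i ∈ s, F (update X k b i) + F (X k) = ∑ i ∈ s, F (X i) + F b := by
  simp_rw [apply_update (fun _ => F)]
  rw [sum_update_of_mem hk, sum_eq_add_sum_sdiff_singleton_of_mem hk (fun i => F (X i))]
  abel

section Cut

variable {V : Type*} (G : SimpleGraph V)

lemma cutCount_inter_add_cutCount_union_le [Finite V] (A B : Set V) :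
    cutCount G (A ∩ B) + cutCount G (A ∪ B) ≤ cutCount G A + cutCount G B := by
  let cut (S : Set V) : Set (V × V) := {p | p.1 ∈ S ∧ p.2 ∉ S ∧ G.Adj p.1 p.2}
  have hunion : cut (A ∩ B) ∪ cut (A ∪ B) ⊆ cut A ∪ cut B := by
    intro p
    simp only [cut, Set.mem_union, Set.mem_inter_iff, Set.mem_ofPred_eq]
    tauto
  have hinter : cut (A ∩ B) ∩ cut (A ∪ B) ⊆ cut A ∩ cut B := by
    intro p
    simp only [cut, Set.mem_union, Set.mem_inter_iff, Set.mem_ofPred_eq]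
    tauto
  calc cutCount G (A ∩ B) + cutCount G (A ∪ B)
      = (cut (A ∩ B) ∪ cut (A ∪ B)).ncard + (cut (A ∩ B) ∩ cut (A ∪ B)).ncard :=
        (Set.ncard_union_add_ncard_inter _ _).symm
    _ ≤ (cut A ∪ cut B).ncard + (cut A ∩ cut B).ncard :=
        add_le_add (Set.ncard_le_ncard hunion) (Set.ncard_le_ncard hinter)
    _ = cutCount G A + cutCount G B := Set.ncard_union_add_ncard_inter _ _

lemma cutCount_le_card_of_forall_adj {α : Type*} {S : Set V} {F : Finset α} (e : α → Sym2 V)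
    (h : ∀ v ∈ S, ∀ u ∉ S, G.Adj v u → ∃ z ∈ F, e z = s(v, u)) : cutCount G S ≤ #F := by
  let cut : Set (V × V) := {p | p.1 ∈ S ∧ p.2 ∉ S ∧ G.Adj p.1 p.2}
  have hinj : Set.InjOn (fun p : V × V => s(p.1, p.2)) cut := by
    rintro ⟨a, b⟩ ⟨ha, hb, -⟩ ⟨a', b'⟩ ⟨ha', hb', -⟩ heq
    rcases Sym2.eq_iff.1 heq with ⟨rfl, rfl⟩ | ⟨rfl, rfl⟩
    · rfl
    · exact absurd ha hb'
  calc cutCount G S = ((fun p : V × V => s(p.1, p.2)) '' cut).ncard :=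
        hinj.ncard_image.symm
    _ ≤ (e '' F).ncard := by
        refine Set.ncard_le_ncard ?_ (F.finite_toSet.image e)
        rintro _ ⟨p, ⟨hp, hpS, hadj⟩, rfl⟩
        obtain ⟨z, hz, hze⟩ := h p.1 hp p.2 hpS hadj
        exact ⟨z, hz, hze⟩
    _ ≤ #F := (Set.ncard_image_le F.finite_toSet).trans (Set.ncard_coe_finset F).le

lemma cutwidth_le_of_forall_cutCount_Iic_le [Fintype V] [LinearOrder V] {w : ℕ}
    (h : ∀ u, cutCount G (Set.Iic u) ≤ w) : cutwidth G ≤ w := by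
  let e := Fintype.orderIsoFinOfCardEq V rfl
  refine Nat.sInf_le ⟨e.toEquiv, fun i => ?_⟩
  change cutCount G (e '' Set.Iic i) ≤ w
  rw [e.image_Iic]
  exact h _

variable {G} in
lemma SimpleGraph.Reachable.iff_of_forall_adj {P : V → Prop}
    (h : ∀ v u, G.Adj v u → (P v ↔ P u)) {v u : V} (hvu : G.Reachable v u) : P v ↔ P u := by
  obtain ⟨p⟩ := hvu
  induction p with
  | nil => rfl
  | cons hadj _ ih => exact (h _ _ hadj).trans ih

end Cut

structure IsCrusade {V : Type*} (G : SimpleGraph V) (r t : ℕ) (X : ℕ → Set V) : Prop where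
  zero : X 0 = ∅
  last : X t = Set.univ
  step : ∀ i < t, (X (i + 1) \ X i).Subsingleton
  cutCount_le : ∀ i ≤ t, cutCount G (X i) ≤ r

noncomputable def crusadeWeight {V : Type*} (G : SimpleGraph V) (t : ℕ) (X : ℕ → Set V) :
    ℕ ×ₗ ℕ :=
  toLex (∑ i ∈ range (t + 1), cutCount G (X i), ∑ i ∈ range (t + 1), (X i).ncard)

lemma crusadeWeight_update_lt {V : Type*} {G : SimpleGraph V} {t k : ℕ} {X : ℕ → Set V}
    (hk : k ≤ t) {A : Set V}
    (h : toLex (cutCount G A, A.ncard) < toLex (cutCount G (X k), (X k).ncard)) :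
    crusadeWeight G t (update X k A) < crusadeWeight G t X := by
  have hk' : k ∈ range (t + 1) := mem_range.2 (Nat.lt_succ_of_le hk)
  have hcut := sum_comp_update_add hk' (cutCount G) X A
  have hcard := sum_comp_update_add hk' Set.ncard X A
  rw [crusadeWeight, crusadeWeight, Prod.Lex.toLex_lt_toLex] at *
  dsimp only at h ⊢
  omega

namespace IsCrusade

variable {V : Type*} {G : SimpleGraph V} {r t : ℕ} {X : ℕ → Set V}

lemma cutwidth_le_of_monotoneOn [Fintype V] (hX : IsCrusade G r t X)
    (hmono : MonotoneOn X (Set.Iic t)) : cutwidth G ≤ r := by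
  classical
  have hex : ∀ v, ∃ i, v ∈ X i := fun v => ⟨t, hX.last ▸ Set.mem_univ v⟩
  let ρ (v : V) : ℕ := Nat.find (hex v)
  have hρt (v : V) : ρ v ≤ t := Nat.find_min' _ (hX.last ▸ Set.mem_univ v)
  have hmem (v : V) {i : ℕ} (hi : i ≤ t) : v ∈ X i ↔ ρ v ≤ i :=
    ⟨fun h => Nat.find_min' _ h, fun h => hmono (hρt v) hi h (Nat.find_spec (hex v))⟩
  -- a vertex of rank `k + 1` is one entering at step `k`, and only one vertex enters per step
  have hρinj : Injective ρ := by
    intro v u hvu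
    obtain ⟨k, hk⟩ : ∃ k, ρ v = k + 1 := Nat.exists_eq_add_one.2 <| Nat.pos_of_ne_zero fun h =>
      by simpa [hX.zero] using Nat.find_eq_zero (hex v) |>.1 h
    have hkt : k < t := by have := hρt v; omega
    refine hX.step k hkt ⟨(hmem v hkt).2 hk.le, fun h => ?_⟩
      ⟨(hmem u hkt).2 (hvu ▸ hk).le, fun h => ?_⟩
    · have := (hmem v hkt.le).1 h; omega
    · have := (hmem u hkt.le).1 h; omega
  let : LinearOrder V := LinearOrder.lift' ρ hρinj
  refine cutwidth_le_of_forall_cutCount_Iic_le G fun u => ?_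
  have hIic : Set.Iic u = X (ρ u) := Set.ext fun v => (hmem v (hρt u)).symm
  rw [hIic]
  exact hX.cutCount_le _ (hρt u)

lemma update (hX : IsCrusade G r t X) {k : ℕ} (hk : 0 < k) {A : Set V}
    (hlast : k = t → A = Set.univ) (hcut : cutCount G A ≤ r)
    (hprev : ∀ j < t, j + 1 = k → (A \ X j).Subsingleton)
    (hnext : k < t → (X (k + 1) \ A).Subsingleton) : IsCrusade G r t (Function.update X k A) where
  zero := by rw [update_of_ne hk.ne, hX.zero]
  last := by
    rcases eq_or_ne t k with rfl | htk
    · rw [update_self, hlast rfl]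
    · rw [update_of_ne htk, hX.last]
  step j hj := by
    rcases eq_or_ne j k with rfl | hjk
    · rw [update_self, update_of_ne (by omega)]
      exact hnext hj
    rcases eq_or_ne (j + 1) k with hjk' | hjk'
    · rw [hjk', update_self, update_of_ne hjk]
      exact hprev j hj hjk'
    · rw [update_of_ne hjk, update_of_ne hjk']
      exact hX.step j hj
  cutCount_le j hj := by
    rcases eq_or_ne j k with rfl | hjk
    · rwa [update_self]
    · rw [update_of_ne hjk]
      exact hX.cutCount_le j hj

/-- Uncrossing: if some `X i ⊄ X (i + 1)`, replacing `X i` by `X i ∩ X (i + 1)` or `X (i + 1)` by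
`X i ∪ X (i + 1)` keeps a crusade (by submodularity of the cut) and lowers the weight. -/
lemma exists_monotoneOn [Finite V] (hX : IsCrusade G r t X) :
    ∃ Y, IsCrusade G r t Y ∧ MonotoneOn Y (Set.Iic t) := by
  obtain ⟨Y, hY, hmin⟩ := (InvImage.wf (crusadeWeight G t) wellFounded_lt).has_min
    {Y | IsCrusade G r t Y} ⟨X, hX⟩
  replace hY : IsCrusade G r t Y := hY
  refine ⟨Y, hY, monotoneOn_of_le_add_one Set.ordConnected_Iic fun i _ _ hi => ?_⟩
  by_contra hsub
  have hit : i < t := hi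
  have hi0 : 0 < i := Nat.pos_of_ne_zero fun h => hsub (by simp [h, hY.zero])
  by_cases hcut : cutCount G (Y i ∩ Y (i + 1)) ≤ cutCount G (Y i)
  · refine hmin _ (hY.update hi0 (by omega) (hcut.trans (hY.cutCount_le i hit.le)) ?_ ?_) ?_
    · rintro j hj rfl
      exact (hY.step j hj).anti (Set.sdiff_subset_sdiff_left Set.inter_subset_left)
    · intro _
      rw [Set.sdiff_inter_self_eq_sdiff]
      exact hY.step i hit
    · refine crusadeWeight_update_lt hit.le (Prod.Lex.toLex_lt_toLex'.2 ⟨hcut, fun _ => ?_⟩)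
      exact Set.ncard_lt_ncard (Set.inter_ssubset_left_iff.2 hsub)
  · have hunion : cutCount G (Y i ∪ Y (i + 1)) < cutCount G (Y (i + 1)) := by
      have := cutCount_inter_add_cutCount_union_le G (Y i) (Y (i + 1))
      omega
    refine hmin _ (hY.update (by omega : 0 < i + 1) (fun h => by rw [h, hY.last, Set.union_univ])
      (hunion.le.trans (hY.cutCount_le _ hi)) ?_ ?_) ?_
    · rintro j - hj
      rw [Nat.add_right_cancel hj, Set.union_sdiff_left]
      exact hY.step i hit
    · intro h
      exact (hY.step (i + 1) h).anti (Set.sdiff_subset_sdiff_right Set.subset_union_right)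
    · exact crusadeWeight_update_lt hi (Prod.Lex.toLex_lt_toLex.2 (Or.inl hunion))

lemma cutwidth_le [Fintype V] (hX : IsCrusade G r t X) : cutwidth G ≤ r := by
  obtain ⟨Y, hY, hmono⟩ := hX.exists_monotoneOn
  exact hY.cutwidth_le_of_monotoneOn hmono

end IsCrusade

section Count

lemma mem_iff_odd_count_of_symmDiff {α : Type*} [DecidableEq α] {S C : ℕ → Finset α}
    (h0 : S 0 = ∅) {i : ℕ} (hS : ∀ j < i, S (j + 1) = symmDiff (S j) (C j)) (z : α) :
    z ∈ S i ↔ Odd (Nat.count (fun j => z ∈ C j) i) := by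
  induction i with
  | zero => simp [h0]
  | succ i ih =>
    rw [hS i i.lt_succ_self, mem_symmDiff, ih fun j hj => hS j (by omega), Nat.count_succ]
    by_cases hz : z ∈ C i <;> simp [hz, Nat.odd_add_one]

variable {β : Type*} [DecidableEq β] {c : ℕ → β}

lemma count_eq_count_add_count {p : ℕ → Prop} [DecidablePred p] {a b : β} (hab : a ≠ b) {i : ℕ}
    (hp : ∀ j < i, p j ↔ c j = a ∨ c j = b) :
    Nat.count p i = Nat.count (c · = a) i + Nat.count (c · = b) i := by
  induction i with
  | zero => simp
  | succ i ih =>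
    rw [Nat.count_succ, Nat.count_succ, Nat.count_succ, ih fun j hj => hp j (by omega)]
    have hpi := hp i i.lt_succ_self
    by_cases ha : c i = a
    · simp [hpi, ha, hab]
      omega
    · by_cases hb : c i = b <;> simp [hpi, ha, hb, hab.symm, add_assoc]

lemma even_count_of_forall_even_count {p : β → Prop} [DecidablePred p] {t : ℕ}
    (h : ∀ j < t, p (c j) → Even (Nat.count (c · = c j) t)) :
    Even (Nat.count (fun j => p (c j)) t) := by
  rw [Nat.count_eq_card_filter_range, card_eq_sum_card_image c]
  refine even_sum _ fun a ha => ?_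
  obtain ⟨j, hj, rfl⟩ := mem_image.1 ha
  rw [mem_filter, mem_range] at hj
  rw [filter_filter, filter_congr fun i _ => and_iff_right_of_imp fun (hi : c i = c j) => hi ▸ hj.2,
    ← Nat.count_eq_card_filter_range]
  exact h j hj.1 hj.2

end Count

section Phi

variable {V : Type*} [DecidableEq V]

def linkConstraint (v u : V) : Finset (XVar V) × Bool := ({(false, v, u), (true, v, u)}, false)

def edgeConstraint (f g : Sym2 V → Bool) (v u : V) : Finset (XVar V) × Bool :=
  ({(false, v, u), (false, u, v)}, f s(v, u) ^^ g s(v, u))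

lemma edgeConstraint_comm (f g : Sym2 V → Bool) (v u : V) :
    edgeConstraint f g v u = edgeConstraint f g u v := by
  simp [edgeConstraint, pair_comm, Sym2.eq_swap]

lemma linkConstraint_ne_edgeConstraint {f g : Sym2 V → Bool} (v u v' u' : V) :
    linkConstraint v u ≠ edgeConstraint f g v' u' := by
  intro h
  have := congrArg (((true, v, u) : XVar V) ∈ ·.1) h
  simp [linkConstraint, edgeConstraint] at this

variable [Fintype V] (G : SimpleGraph V) [DecidableRel G.Adj]

def vertexConstraint (v : V) : Finset (XVar V) × Bool :=
  ((G.neighborFinset v).image fun u => (true, v, u), false)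

lemma mem_phiSystem (f g : Sym2 V → Bool) {c : Finset (XVar V) × Bool} :
    c ∈ phiSystem G f g ↔ (∃ v u, G.Adj v u ∧ c = linkConstraint v u) ∨
      (∃ v, c = vertexConstraint G v) ∨ ∃ v u, G.Adj v u ∧ c = edgeConstraint f g v u :=
  Iff.rfl

variable {G}

lemma linkConstraint_ne_vertexConstraint (v u w : V) :
    linkConstraint v u ≠ vertexConstraint G w := by
  intro h
  have := congrArg (((false, v, u) : XVar V) ∈ ·.1) h
  simp [linkConstraint, vertexConstraint] at this

lemma vertexConstraint_injective (hdeg : ∀ v, 0 < G.degree v) :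
    Injective (vertexConstraint G) := by
  intro v w h
  obtain ⟨u, hu⟩ := (G.degree_pos_iff_exists_adj v).1 (hdeg v)
  have := congrArg (((true, v, u) : XVar V) ∈ ·.1) h
  simp only [vertexConstraint, mem_image, mem_neighborFinset, Prod.mk.injEq, true_and] at this
  obtain ⟨_, -, hwv, -⟩ := cast this ⟨u, hu, rfl⟩
  exact hwv.symm

variable {f g : Sym2 V → Bool} {c : Finset (XVar V) × Bool}

lemma y_mem_iff_of_mem_phiSystem (hc : c ∈ phiSystem G f g) {v u : V} (hvu : G.Adj v u) :
    (true, v, u) ∈ c.1 ↔ c = linkConstraint v u ∨ c = vertexConstraint G v := by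
  refine ⟨fun h => ?_, ?_⟩
  · rcases (mem_phiSystem G f g).1 hc with ⟨v', u', -, rfl⟩ | ⟨v', rfl⟩ | ⟨v', u', -, rfl⟩
    · simp_all [linkConstraint]
    · obtain ⟨_, -, hv⟩ := mem_image.1 h
      obtain ⟨-, rfl, -⟩ := Prod.ext_iff.1 hv
      exact Or.inr rfl
    · simp [edgeConstraint] at h
  · rintro (rfl | rfl) <;> simp [linkConstraint, vertexConstraint, hvu]

lemma x_mem_iff_of_mem_phiSystem (hc : c ∈ phiSystem G f g) {v u : V} :
    (false, v, u) ∈ c.1 ↔ c = linkConstraint v u ∨ c = edgeConstraint f g v u := by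
  refine ⟨fun h => ?_, ?_⟩
  · rcases (mem_phiSystem G f g).1 hc with ⟨v', u', -, rfl⟩ | ⟨v', rfl⟩ | ⟨v', u', -, rfl⟩
    · simp_all [linkConstraint]
    · simp [vertexConstraint] at h
    · simp only [edgeConstraint, mem_insert, mem_singleton, Prod.mk.injEq, true_and] at h
      rcases h with ⟨rfl, rfl⟩ | ⟨rfl, rfl⟩
      · exact Or.inr rfl
      · exact Or.inr (edgeConstraint_comm f g _ _)
  · rintro (rfl | rfl) <;> simp [linkConstraint, edgeConstraint]

end Phi

structure IsDerivation {V : Type*} [DecidableEq V] (Φ : Set (Finset (XVar V) × Bool)) (t : ℕ)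
    (Seq : ℕ → Finset (XVar V)) (c : ℕ → Finset (XVar V) × Bool) : Prop where
  zero : Seq 0 = ∅
  step : ∀ i < t, c i ∈ Φ ∧ Seq (i + 1) = symmDiff (Seq i) (c i).1

section Derivation

variable {V : Type*} [Fintype V] [DecidableEq V] {G : SimpleGraph V} [DecidableRel G.Adj]
  {f g : Sym2 V → Bool} {Seq : ℕ → Finset (XVar V)} {c : ℕ → Finset (XVar V) × Bool} {t : ℕ}

lemma IsDerivation.y_mem_iff (hd : IsDerivation (phiSystem G f g) t Seq c) {i : ℕ}
    (hi : i ≤ t) {v u : V} (hvu : G.Adj v u) :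
    (true, v, u) ∈ Seq i ↔
      Odd (Nat.count (c · = linkConstraint v u) i + Nat.count (c · = vertexConstraint G v) i) := by
  rw [mem_iff_odd_count_of_symmDiff hd.zero (fun j hj => (hd.step j (by omega)).2),
    count_eq_count_add_count (linkConstraint_ne_vertexConstraint v u v)
      fun j hj => y_mem_iff_of_mem_phiSystem (hd.step j (by omega)).1 hvu]

lemma IsDerivation.x_mem_iff (hd : IsDerivation (phiSystem G f g) t Seq c) {i : ℕ}
    (hi : i ≤ t) (v u : V) :
    (false, v, u) ∈ Seq i ↔
      Odd (Nat.count (c · = linkConstraint v u) i +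
        Nat.count (c · = edgeConstraint f g v u) i) := by
  rw [mem_iff_odd_count_of_symmDiff hd.zero (fun j hj => (hd.step j (by omega)).2),
    count_eq_count_add_count (linkConstraint_ne_edgeConstraint v u v u)
      fun j hj => x_mem_iff_of_mem_phiSystem (hd.step j (by omega)).1]

variable (G) in
def oddVertices (c : ℕ → Finset (XVar V) × Bool) (i : ℕ) : Set V :=
  {v | Odd (Nat.count (c · = vertexConstraint G v) i)}

lemma oddVertices_zero : oddVertices G c 0 = ∅ := by
  simp [oddVertices]

lemma oddVertices_succ_sdiff_subsingleton (hdeg : ∀ v, 0 < G.degree v) (i : ℕ) :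
    (oddVertices G c (i + 1) \ oddVertices G c i).Subsingleton := by
  have hused : ∀ v ∈ oddVertices G c (i + 1) \ oddVertices G c i, c i = vertexConstraint G v := by
    rintro v ⟨hv, hv'⟩
    by_contra hne
    simp [oddVertices, Nat.count_succ, hne] at hv hv'
    exact Nat.not_even_iff_odd.2 hv hv'
  exact fun v hv w hw => vertexConstraint_injective hdeg ((hused v hv).symm.trans (hused w hw))

/-- Each edge leaving `oddVertices G c i` puts one of its four variables into `Seq i`. -/
lemma IsDerivation.cutCount_oddVertices_le (hd : IsDerivation (phiSystem G f g) t Seq c)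
    {i : ℕ} (hi : i ≤ t) : cutCount G (oddVertices G c i) ≤ #(Seq i) := by
  refine cutCount_le_card_of_forall_adj G (fun z => s(z.2.1, z.2.2)) fun v hv u hu hvu => ?_
  by_contra hnone
  simp only [not_exists, not_and] at hnone
  have h1 := (hd.y_mem_iff hi hvu).not.1 (hnone _ · rfl)
  have h2 := (hd.x_mem_iff hi v u).not.1 (hnone _ · rfl)
  have h3 := (hd.y_mem_iff hi hvu.symm).not.1 (hnone _ · Sym2.eq_swap)
  have h4 := (hd.x_mem_iff hi u v).not.1 (hnone _ · Sym2.eq_swap)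
  rw [edgeConstraint_comm] at h4
  simp only [oddVertices, Set.mem_ofPred_eq, Nat.odd_iff] at hv hu h1 h2 h3 h4
  omega

lemma IsDerivation.odd_count_vertexConstraint_iff_of_adj
    (hd : IsDerivation (phiSystem G f g) t Seq c) (hlast : Seq t = ∅) {v u : V} (hvu : G.Adj v u) :
    Odd (Nat.count (c · = vertexConstraint G v) t) ↔
      Odd (Nat.count (c · = vertexConstraint G u) t) := by
  have h1 := (hd.y_mem_iff le_rfl hvu).not.1 (by simp [hlast])
  have h2 := (hd.x_mem_iff le_rfl v u).not.1 (by simp [hlast])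
  have h3 := (hd.y_mem_iff le_rfl hvu.symm).not.1 (by simp [hlast])
  have h4 := (hd.x_mem_iff le_rfl u v).not.1 (by simp [hlast])
  rw [edgeConstraint_comm] at h4
  simp only [Nat.odd_iff] at h1 h2 h3 h4 ⊢
  omega

lemma IsDerivation.not_odd_count_rhs (hd : IsDerivation (phiSystem G f g) t Seq c)
    (hlast : Seq t = ∅) (heven : ∀ v, ¬ Odd (Nat.count (c · = vertexConstraint G v) t)) :
    ¬ Odd (Nat.count (fun i => (c i).2 = true) t) := by
  refine Nat.not_odd_iff_even.2 <|
    even_count_of_forall_even_count (p := fun a : Finset (XVar V) × Bool => a.2 = true)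
      fun j hj hrhs => ?_
  rcases (mem_phiSystem G f g).1 (hd.step j hj).1 with ⟨v, u, -, hc⟩ | ⟨v, hc⟩ | ⟨v, u, hvu, hc⟩
  · simp [hc, linkConstraint] at hrhs
  · simp [hc, vertexConstraint] at hrhs
  have h1 := (hd.y_mem_iff le_rfl hvu).not.1 (by simp [hlast])
  have h2 := (hd.x_mem_iff le_rfl v u).not.1 (by simp [hlast])
  have h3 := heven v
  -- `x_{(v,u)}` and `y_{(v,u)}` pair the edge constraint with the vertex constraint at `v`
  rw [hc]
  simp only [Nat.odd_iff, Nat.even_iff] at h1 h2 h3 ⊢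
  omega

end Derivation

theorem phi_no_small_width_refutation_general {V : Type*} [Fintype V] [DecidableEq V]
    (G : SimpleGraph V) [DecidableRel G.Adj]
    (hconn : G.Connected) (hreg : ∀ v, G.degree v = 3)
    (r : ℕ) (hcw : cutwidth G = r + 1)
    (f g : Sym2 V → Bool) :
    ¬ XorRefutable (phiSystem G f g) r := by
  rintro ⟨t, Seq, c, h0, hlast, hstep, hwidth, hrhs⟩
  have hd : IsDerivation (phiSystem G f g) t Seq c := ⟨h0, hstep⟩
  have hparity (v u : V) : Odd (Nat.count (c · = vertexConstraint G v) t) ↔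
      Odd (Nat.count (c · = vertexConstraint G u) t) :=
    (hconn.preconnected v u).iff_of_forall_adj
      fun _ _ => hd.odd_count_vertexConstraint_iff_of_adj hlast
  obtain ⟨v₀⟩ := hconn.nonempty
  by_cases hodd : Odd (Nat.count (c · = vertexConstraint G v₀) t)
  · have hX : IsCrusade G r t (oddVertices G c) :=
      { zero := oddVertices_zero
        last := Set.eq_univ_of_forall fun v => (hparity v v₀).2 hodd
        step := fun i _ => oddVertices_succ_sdiff_subsingleton (fun v => by simp [hreg v]) i
        cutCount_le := fun i hi => (hd.cutCount_oddVertices_le hi).trans (hwidth i hi) }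
    have := hX.cutwidth_le
    omega
  · refine hd.not_odd_count_rhs hlast (fun v => (hparity v v₀).not.2 hodd) ?_
    simpa [Nat.count_eq_card_filter_range] using hrhs.symm

/-- If `G` is connected, 3-regular, with cutwidth `r+1`, and `f, g` have different
parity, then `φ(G,f,g)` cannot be refuted by width-`r` resolution. -/
theorem phi_no_small_width_refutation {V : Type*} [Fintype V] [DecidableEq V]
    (G : SimpleGraph V) [DecidableRel G.Adj]
    (hconn : G.Connected) (hreg : ∀ v, G.degree v = 3)
    (r : ℕ) (hcw : cutwidth G = r + 1)
    (f g : Sym2 V → Bool) (hpar : ¬ (EvenParity G f ↔ EvenParity G g)) :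
    ¬ XorRefutable (phiSystem G f g) r :=
  phi_no_small_width_refutation_general G hconn hreg r hcw f g
end

section
/- In any XOR resolution refutation of φ(G,f,g) over a connected 3-regular graph G (a derivation from ∅ to ∅ with an odd number of odd-parity steps), every constraint of φ(G,f,g) is used an odd number of times. -/
open SimpleGraph

set_option linter.unusedSectionVars false
set_option linter.unusedVariables false


lemma even_var_count {V : Type*} [DecidableEq V]
    {t : ℕ} {Seq : ℕ → Finset (XVar V)} {c : ℕ → Finset (XVar V) × Bool}
    (h0 : Seq 0 = ∅) (ht : Seq t = ∅)
    (hstep : ∀ i < t, Seq (i + 1) = symmDiff (Seq i) (c i).1) (a : XVar V) :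
    Even (((Finset.range t).filter fun i => a ∈ (c i).1).card) := by
  classical
  have key : ∀ k, k ≤ t →
      (a ∈ Seq k ↔ Odd (((Finset.range k).filter fun i => a ∈ (c i).1).card)) := by
    intro k
    induction k with
    | zero => intro _; simp [h0]
    | succ k ih =>
      intro hk
      have ihk := ih (Nat.le_of_succ_le hk)
      rw [Finset.range_add_one, Finset.filter_insert, hstep k hk, Finset.mem_symmDiff]
      by_cases hmem : a ∈ (c k).1
      · rw [if_pos hmem, Finset.card_insert_of_notMem (by simp), Nat.odd_add_one, ← ihk]
        tauto
      · rw [if_neg hmem, ← ihk]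
        tauto
  have h := key t le_rfl
  rw [ht] at h
  simp only [Finset.notMem_empty, false_iff] at h
  exact Nat.not_odd_iff_even.mp h

lemma count_split {V : Type*} [DecidableEq V]
    {t : ℕ} {c : ℕ → Finset (XVar V) × Bool} {Φ : Set (Finset (XVar V) × Bool)}
    (hΦ : ∀ i < t, c i ∈ Φ) (a : XVar V) {c₁ c₂ : Finset (XVar V) × Bool}
    (hne : c₁ ≠ c₂)
    (hmem : ∀ d ∈ Φ, a ∈ d.1 ↔ d = c₁ ∨ d = c₂) :
    ((Finset.range t).filter fun i => a ∈ (c i).1).card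
      = ((Finset.range t).filter fun i => c i = c₁).card
        + ((Finset.range t).filter fun i => c i = c₂).card := by
  classical
  rw [← Finset.card_union_of_disjoint]
  · congr 1
    rw [← Finset.filter_or]
    apply Finset.filter_congr
    intro i hi
    simpa using hmem (c i) (hΦ i (Finset.mem_range.mp hi))
  · rw [Finset.disjoint_left]
    rintro i hi1 hi2
    exact hne (by rw [← (Finset.mem_filter.mp hi1).2, (Finset.mem_filter.mp hi2).2])

lemma exists_odd_fiber {V : Type*} [DecidableEq V]
    {t : ℕ} {c : ℕ → Finset (XVar V) × Bool}
    (hodd : Odd (((Finset.range t).filter fun i => (c i).2 = true).card)) :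
    ∃ i < t, Odd (((Finset.range t).filter fun j => c j = c i).card) := by
  classical
  by_contra h
  push_neg at h
  set F := (Finset.range t).filter fun i => (c i).2 = true with hF
  have hcard : F.card = ∑ d ∈ F.image c, (F.filter fun j => c j = d).card :=
    Finset.card_eq_sum_card_image c F
  have heven : Even F.card := by
    rw [hcard]
    apply Finset.even_sum
    intro d hd
    obtain ⟨i, hiF, rfl⟩ := Finset.mem_image.mp hd
    have hi2 := (Finset.mem_filter.mp hiF).2
    have hit := Finset.mem_range.mp (Finset.mem_filter.mp hiF).1
    have hEq : F.filter (fun j => c j = c i) = (Finset.range t).filter fun j => c j = c i := by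
      rw [hF, Finset.filter_filter]
      apply Finset.filter_congr
      intro j hj
      constructor
      · tauto
      · intro hji; exact ⟨by rw [hji]; exact hi2, hji⟩
    rw [hEq]
    exact Nat.not_odd_iff_even.mp (h i hit)
  exact (Nat.not_odd_iff_even.mpr heven) hodd

section AuxLemmas

def cA {V : Type*} [DecidableEq V] (v u : V) : Finset (XVar V) × Bool :=
  ({(false, v, u), (true, v, u)}, false)

def cB {V : Type*} [Fintype V] [DecidableEq V] (G : SimpleGraph V) [DecidableRel G.Adj]
    (v : V) : Finset (XVar V) × Bool :=
  ((G.neighborFinset v).image (fun u => (true, v, u)), false)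

def cC {V : Type*} [DecidableEq V] (f g : Sym2 V → Bool) (v u : V) : Finset (XVar V) × Bool :=
  ({(false, v, u), (false, u, v)}, f s(v, u) ^^ g s(v, u))

lemma cC_comm {V : Type*} [DecidableEq V] (f g : Sym2 V → Bool) (v u : V) :
    cC f g v u = cC f g u v := by
  unfold cC
  rw [Finset.pair_comm ((false, v, u) : XVar V), Sym2.eq_swap]

variable {V : Type*} [Fintype V] [DecidableEq V] {G : SimpleGraph V} [DecidableRel G.Adj]
  {f g : Sym2 V → Bool}

lemma cA_ne_cB (hreg : ∀ v, G.degree v = 3) (v u w : V) : cA v u ≠ cB G w := by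
  intro h
  have h1 : (cA v u).1.card = 2 := by
    simp [cA, Finset.card_pair (by simp : ((false,v,u) : XVar V) ≠ (true,v,u))]
  have h2 : (cB G w).1.card = 3 := by
    have hinj : Function.Injective (fun x => ((true, w, x) : XVar V)) := by
      intro a b hab; simpa using hab
    simp [cB, Finset.card_image_of_injective _ hinj, hreg]
  rw [h, h2] at h1
  exact absurd h1 (by norm_num)

lemma cA_ne_cC (v u w x : V) : cA v u ≠ cC f g w x := by
  intro h
  have hm : ((true, v, u) : XVar V) ∈ (cA v u).1 := by simp [cA]
  rw [h] at hm
  simp [cC, Prod.ext_iff] at hm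

lemma y_mem_iff {v u : V} (hvu : G.Adj v u) :
    ∀ d ∈ phiSystem G f g, ((true, v, u) : XVar V) ∈ d.1 ↔ d = cA v u ∨ d = cB G v := by
  intro d hd
  constructor
  · intro hm
    simp only [phiSystem, Set.mem_setOf_eq] at hd
    obtain (⟨v', u', h, rfl⟩ | ⟨v', rfl⟩ | ⟨v', u', h, rfl⟩) := hd
    · simp only [Finset.mem_insert, Finset.mem_singleton, Prod.ext_iff] at hm
      obtain ⟨hb, hv, hu⟩ | ⟨hb, hv, hu⟩ := hm
      · simp at hb
      · left; subst hv; subst hu; rfl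
    · simp only [Finset.mem_image, SimpleGraph.mem_neighborFinset, Prod.ext_iff] at hm
      obtain ⟨w, hw, _, hv, _⟩ := hm
      right; subst hv; rfl
    · simp only [Finset.mem_insert, Finset.mem_singleton, Prod.ext_iff] at hm
      obtain ⟨hb, _⟩ | ⟨hb, _⟩ := hm <;> simp at hb
  · rintro (rfl | rfl)
    · simp [cA]
    · simp only [cB, Finset.mem_image, SimpleGraph.mem_neighborFinset]
      exact ⟨u, hvu, rfl⟩

lemma x_mem_iff {v u : V} (hvu : G.Adj v u) :
    ∀ d ∈ phiSystem G f g, ((false, v, u) : XVar V) ∈ d.1 ↔ d = cA v u ∨ d = cC f g v u := by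
  intro d hd
  constructor
  · intro hm
    simp only [phiSystem, Set.mem_setOf_eq] at hd
    obtain (⟨v', u', h, rfl⟩ | ⟨v', rfl⟩ | ⟨v', u', h, rfl⟩) := hd
    · simp only [Finset.mem_insert, Finset.mem_singleton, Prod.ext_iff] at hm
      obtain ⟨hb, hv, hu⟩ | ⟨hb, hv, hu⟩ := hm
      · left; subst hv; subst hu; rfl
      · simp at hb
    · simp only [Finset.mem_image, SimpleGraph.mem_neighborFinset, Prod.ext_iff] at hm
      obtain ⟨w, hw, hb, _⟩ := hm
      simp at hb
    · simp only [Finset.mem_insert, Finset.mem_singleton, Prod.ext_iff] at hm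
      obtain ⟨_, hv, hu⟩ | ⟨_, hv, hu⟩ := hm
      · right; subst hv; subst hu; rfl
      · right; subst hv; subst hu; exact cC_comm f g v u ▸ rfl
  · rintro (rfl | rfl)
    · simp [cA]
    · simp [cC]

end AuxLemmas

/-- In any XOR resolution refutation of `φ(G,f,g)` over a connected 3-regular
graph `G` (a derivation from `∅` to `∅` using an odd number of odd-right-hand-side
steps), every constraint of `φ(G,f,g)` is used an odd number of times. -/
theorem phi_refutation_uses_all_constraints_oddly {V : Type*} [Fintype V] [DecidableEq V]
    (G : SimpleGraph V) [DecidableRel G.Adj]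
    (hconn : G.Connected) (hreg : ∀ v, G.degree v = 3)
    (f g : Sym2 V → Bool)
    (t : ℕ) (Seq : ℕ → Finset (XVar V)) (c : ℕ → Finset (XVar V) × Bool)
    (h0 : Seq 0 = ∅) (ht : Seq t = ∅)
    (hstep : ∀ i < t, c i ∈ phiSystem G f g ∧ Seq (i + 1) = symmDiff (Seq i) (c i).1)
    (hodd : Odd (((Finset.range t).filter fun i => (c i).2 = true).card)) :
    ∀ c₀ ∈ phiSystem G f g,
      Odd (((Finset.range t).filter fun i => c i = c₀).card) := by
  classical
  set N : Finset (XVar V) × Bool → ℕ :=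
    fun d => ((Finset.range t).filter fun i => c i = d).card with hN
  have hΦ : ∀ i < t, c i ∈ phiSystem G f g := fun i hi => (hstep i hi).1
  have hsd : ∀ i < t, Seq (i + 1) = symmDiff (Seq i) (c i).1 := fun i hi => (hstep i hi).2
  have link : ∀ (a : XVar V) (c₁ c₂ : Finset (XVar V) × Bool), c₁ ≠ c₂ →
      (∀ d ∈ phiSystem G f g, a ∈ d.1 ↔ d = c₁ ∨ d = c₂) →
      (Odd (N c₁) ↔ Odd (N c₂)) := by
    intro a c₁ c₂ hne hmem
    have hev := even_var_count h0 ht hsd a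
    rw [count_split hΦ a hne hmem] at hev
    simp only [hN]
    rw [Nat.odd_iff, Nat.odd_iff]
    rw [Nat.even_add, Nat.even_iff, Nat.even_iff] at hev
    omega
  have hAB : ∀ v u, G.Adj v u → (Odd (N (cA v u)) ↔ Odd (N (cB G v))) := fun v u hvu =>
    link (true, v, u) _ _ (cA_ne_cB hreg v u v) (y_mem_iff hvu)
  have hAC : ∀ v u, G.Adj v u → (Odd (N (cA v u)) ↔ Odd (N (cC f g v u))) := fun v u hvu =>
    link (false, v, u) _ _ (cA_ne_cC v u v u) (x_mem_iff hvu)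
  have hAA : ∀ v u, G.Adj v u → (Odd (N (cA v u)) ↔ Odd (N (cA u v))) := by
    intro v u hvu
    rw [hAC v u hvu, cC_comm, ← hAC u v hvu.symm]
  have hAAn : ∀ v u w, G.Adj v u → G.Adj v w → (Odd (N (cA v u)) ↔ Odd (N (cA v w))) := by
    intro v u w h1 h2; rw [hAB v u h1, ← hAB v w h2]
  have keyA : ∀ (v w : V) (p : G.Walk v w) (u x : V), G.Adj v u → G.Adj w x →
      (Odd (N (cA v u)) ↔ Odd (N (cA w x))) := by
    intro v w p
    induction p with
    | nil => intro u x h1 h2; exact hAAn _ _ _ h1 h2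
    | @cons v b w h p ih =>
      intro u x h1 h2
      rw [hAAn _ _ _ h1 h, hAA _ _ h]
      exact ih _ _ h.symm h2
  have rep : ∀ d ∈ phiSystem G f g, ∃ v u, G.Adj v u ∧ (Odd (N d) ↔ Odd (N (cA v u))) := by
    intro d hd
    simp only [phiSystem, Set.mem_setOf_eq] at hd
    obtain (⟨v, u, h, rfl⟩ | ⟨v, rfl⟩ | ⟨v, u, h, rfl⟩) := hd
    · exact ⟨v, u, h, Iff.rfl⟩
    · have hne : (G.neighborFinset v).Nonempty := by
        rw [← Finset.card_pos, SimpleGraph.card_neighborFinset_eq_degree, hreg]; norm_num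
      obtain ⟨u, hu⟩ := hne
      have h := (SimpleGraph.mem_neighborFinset G v u).mp hu
      exact ⟨v, u, h, (hAB v u h).symm⟩
    · exact ⟨v, u, h, (hAC v u h).symm⟩
  obtain ⟨i, hit, hioo⟩ := exists_odd_fiber hodd
  intro c₀ hc₀
  obtain ⟨v, u, hvu, hiff₀⟩ := rep c₀ hc₀
  obtain ⟨w, x, hwx, hiffi⟩ := rep (c i) (hΦ i hit)
  obtain ⟨p⟩ := hconn.preconnected v w
  exact hiff₀.mpr ((keyA v w p u x hvu hwx).mpr (hiffi.mp hioo))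
end
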